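/- Let D₁ : V → V^{⊗m} be an m-fold derivation and D₂ : V → V^{⊗n} an n-fold derivation of V (m, n ≥ 1). Then the commutator [D₁,D₂] := D₁∘D₂ − D₂∘D₁ : V → V^{⊗(m+n−1)}, computed using the extensions of D₁ and D₂ to tensor powers, is an (m+n−1)-fold derivation of V. -/

import Mathlib

open TensorProduct

section TP

variable (𝔽 : Type) [Field 𝔽] (V : Type) [Ring V] [Algebra 𝔽 V]

/-- A bundled `𝔽`-module. -/
structure BMod : Type 1 where
  carrier : Type
  [acg : AddCommGroup carrier]
  [mod : Module 𝔽 carrier]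

attribute [instance] BMod.acg BMod.mod

instance : CoeSort (BMod 𝔽) Type := ⟨BMod.carrier⟩

/-- `Tp k` is the `(k+1)`-fold tensor power `V^{⊗(k+1)}`, built by appending factors
on the right: `Tp 0 = V`, `Tp (k+1) = Tp k ⊗ V`. -/
noncomputable def Tp : ℕ → BMod 𝔽 :=
  fun n => Nat.rec (BMod.mk V) (fun _ ih => BMod.mk (TensorProduct 𝔽 ih.carrier V)) n

/-- Cast along an equality of indices. -/
noncomputable def castT {p q : ℕ} (h : p = q) : Tp 𝔽 V p ≃ₗ[𝔽] Tp 𝔽 V q :=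
  h ▸ LinearEquiv.refl 𝔽 (Tp 𝔽 V p)

/-- Left multiplication by `a` on the first tensor factor:
`a · (b₁ ⊗ ⋯ ⊗ bₙ) = (a b₁) ⊗ ⋯ ⊗ bₙ`. -/
noncomputable def lmulT (a : V) : (k : ℕ) → Tp 𝔽 V k →ₗ[𝔽] Tp 𝔽 V k
  | 0 => (LinearMap.mulLeft 𝔽 a : V →ₗ[𝔽] V)
  | (k+1) => LinearMap.rTensor V (lmulT a k)

/-- Right multiplication by `c` on the last tensor factor:
`(b₁ ⊗ ⋯ ⊗ bₙ) · c = b₁ ⊗ ⋯ ⊗ (bₙ c)`. -/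
noncomputable def rmulT (c : V) : (k : ℕ) → Tp 𝔽 V k →ₗ[𝔽] Tp 𝔽 V k
  | 0 => (LinearMap.mulRight 𝔽 c : V →ₗ[𝔽] V)
  | (k+1) => LinearMap.lTensor ((Tp 𝔽 V k : Type)) (LinearMap.mulRight 𝔽 c)

variable {𝔽 V}

/-- `D : V →ₗ V^{⊗(d+1)}` is a `(d+1)`-fold derivation if
`D(ab) = (Da)·b + a·(Db)` for the outer bimodule structure. -/
def IsNDeriv {d : ℕ} (D : V →ₗ[𝔽] Tp 𝔽 V d) : Prop :=
  ∀ a b : V, D (a * b) = rmulT 𝔽 V b d (D a) + lmulT 𝔽 V a d (D b)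

variable (𝔽 V)

/-- Concatenation `V^{⊗(p+1)} ⊗ V^{⊗(q+1)} → V^{⊗(p+q+2)}`. -/
noncomputable def concatT : (p q : ℕ) → Tp 𝔽 V p →ₗ[𝔽] Tp 𝔽 V q →ₗ[𝔽] Tp 𝔽 V (p + q + 1)
  | p, 0 => TensorProduct.mk 𝔽 (Tp 𝔽 V p) V
  | p, (q+1) => (LinearMap.rTensorHom V).comp (concatT p q)

variable {𝔽 V}

/-- The extension of a `(d+1)`-fold derivation `D` to `V^{⊗(k+1)}`:
`D(a₁⊗⋯⊗aₘ) = Σ_i a₁⊗⋯⊗D(aᵢ)⊗⋯⊗aₘ`. -/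
noncomputable def extD {d : ℕ} (D : V →ₗ[𝔽] Tp 𝔽 V d) :
    (k : ℕ) → Tp 𝔽 V k →ₗ[𝔽] Tp 𝔽 V (k + d)
  | 0 => (castT 𝔽 V (Nat.zero_add d).symm).toLinearMap ∘ₗ D
  | (k+1) =>
      ((castT 𝔽 V (Nat.succ_add k d).symm).toLinearMap ∘ₗ
        TensorProduct.lift ((concatT 𝔽 V k d).compl₂ D))
      + ((castT 𝔽 V (Nat.succ_add k d).symm).toLinearMap ∘ₗ
        LinearMap.rTensor V (extD D k))

/-- `D_L`: apply `D` to the first (leftmost) tensor factor only. -/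
noncomputable def extL {d : ℕ} (D : V →ₗ[𝔽] Tp 𝔽 V d) :
    (k : ℕ) → Tp 𝔽 V k →ₗ[𝔽] Tp 𝔽 V (k + d)
  | 0 => (castT 𝔽 V (Nat.zero_add d).symm).toLinearMap ∘ₗ D
  | (k+1) =>
      (castT 𝔽 V (Nat.succ_add k d).symm).toLinearMap ∘ₗ
        LinearMap.rTensor V (extL D k)

/-- `D_R`: apply `D` to the last (rightmost) tensor factor only. -/
noncomputable def extR {d : ℕ} (D : V →ₗ[𝔽] Tp 𝔽 V d) :
    (k : ℕ) → Tp 𝔽 V k →ₗ[𝔽] Tp 𝔽 V (k + d)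
  | 0 => (castT 𝔽 V (Nat.zero_add d).symm).toLinearMap ∘ₗ D
  | (k+1) =>
      (castT 𝔽 V (Nat.succ_add k d).symm).toLinearMap ∘ₗ
        TensorProduct.lift ((concatT 𝔽 V k d).compl₂ D)

/-- `D_{(i)}` (`i` 0-based from the left): apply `D` to the `(i+1)`-st tensor factor only. -/
noncomputable def extAt {d : ℕ} (D : V →ₗ[𝔽] Tp 𝔽 V d) :
    (k : ℕ) → (i : ℕ) → Tp 𝔽 V k →ₗ[𝔽] Tp 𝔽 V (k + d)
  | 0, _ => (castT 𝔽 V (Nat.zero_add d).symm).toLinearMap ∘ₗ D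
  | (k+1), i =>
      if i = k + 1 then
        (castT 𝔽 V (Nat.succ_add k d).symm).toLinearMap ∘ₗ
          TensorProduct.lift ((concatT 𝔽 V k d).compl₂ D)
      else
        (castT 𝔽 V (Nat.succ_add k d).symm).toLinearMap ∘ₗ
          LinearMap.rTensor V (extAt D k i)

variable (𝔽 V)

/-- Inserting a factor at the front: `consT a (b₁⊗⋯⊗bₙ) = a⊗b₁⊗⋯⊗bₙ`, bundled. -/
noncomputable def consT : (k : ℕ) → V →ₗ[𝔽] Tp 𝔽 V k →ₗ[𝔽] Tp 𝔽 V (k + 1)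
  | 0 => TensorProduct.mk 𝔽 V V
  | (k+1) => (LinearMap.rTensorHom V).comp (consT k)

/-- The cyclic permutation `σ` on `V^{⊗(k+1)}`:
`(a₁ ⊗ ⋯ ⊗ aₙ)^σ = aₙ ⊗ a₁ ⊗ ⋯ ⊗ aₙ₋₁`. -/
noncomputable def sigmaT : (k : ℕ) → Tp 𝔽 V k →ₗ[𝔽] Tp 𝔽 V k
  | 0 => LinearMap.id
  | (k+1) => TensorProduct.lift ((consT 𝔽 V k).flip)

end TP

/-!
The extension of a derivation `D` to tensor powers obeys a Leibniz rule for the outer bimodule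
structure up to a correction term: `D(x·b) = D(x)·b + x ⋆ D(b)` and `D(a·x) = a·D(x) + D(a) ⋆ x`,
where `u ⋆ w` multiplies the last factor of `u` into the first factor of `w` (`mulConcatT`).
Expanding `D₁(D₂(ab))` and `D₂(D₁(ab))` with these rules, the correction terms `D₂a ⋆ D₁b` and
`D₁a ⋆ D₂b` appear in both and cancel in the commutator.
-/

section Tensor

variable {𝔽 : Type} [Field 𝔽] {V : Type} [Ring V] [Algebra 𝔽 V]

@[simp]
theorem castT_rfl {p : ℕ} (h : p = p) (x : Tp 𝔽 V p) : castT 𝔽 V h x = x := rfl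

@[simp]
theorem castT_castT {p q r : ℕ} (h : p = q) (h' : q = r) (x : Tp 𝔽 V p) :
    castT 𝔽 V h' (castT 𝔽 V h x) = castT 𝔽 V (h.trans h') x := by
  subst h h'; rfl

theorem castT_lmulT {p q : ℕ} (h : p = q) (a : V) (x : Tp 𝔽 V p) :
    castT 𝔽 V h (lmulT 𝔽 V a p x) = lmulT 𝔽 V a q (castT 𝔽 V h x) := by
  subst h; rfl

theorem castT_rmulT {p q : ℕ} (h : p = q) (c : V) (x : Tp 𝔽 V p) :
    castT 𝔽 V h (rmulT 𝔽 V c p x) = rmulT 𝔽 V c q (castT 𝔽 V h x) := by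
  subst h; rfl

theorem castT_tmul {p q : ℕ} (h : p = q) (x : Tp 𝔽 V p) (c : V) :
    (castT 𝔽 V h x ⊗ₜ[𝔽] c : Tp 𝔽 V (q + 1)) = castT 𝔽 V (congrArg Nat.succ h) (x ⊗ₜ[𝔽] c) := by
  subst h; rfl

@[elab_as_elim]
theorem Tp.induction_on {k : ℕ} {motive : Tp 𝔽 V (k + 1) → Prop} (x : Tp 𝔽 V (k + 1))
    (zero : motive 0) (tmul : ∀ (y : Tp 𝔽 V k) (c : V), motive (y ⊗ₜ[𝔽] c : Tp 𝔽 V (k + 1)))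
    (add : ∀ u v, motive u → motive v → motive (u + v)) : motive x :=
  TensorProduct.induction_on (motive := motive) x zero tmul add

theorem Tp.add_tmul {k : ℕ} (u v : Tp 𝔽 V k) (c : V) :
    ((u + v) ⊗ₜ[𝔽] c : Tp 𝔽 V (k + 1)) =
      (u ⊗ₜ[𝔽] c : Tp 𝔽 V (k + 1)) + (v ⊗ₜ[𝔽] c : Tp 𝔽 V (k + 1)) :=
  TensorProduct.add_tmul _ _ _

theorem lmulT_succ_tmul {k : ℕ} (a : V) (x : Tp 𝔽 V k) (c : V) :
    lmulT 𝔽 V a (k + 1) (x ⊗ₜ[𝔽] c) = (lmulT 𝔽 V a k x ⊗ₜ[𝔽] c : Tp 𝔽 V (k + 1)) :=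
  LinearMap.rTensor_tmul _ _ _ _

theorem rmulT_succ_tmul {k : ℕ} (b : V) (x : Tp 𝔽 V k) (c : V) :
    rmulT 𝔽 V b (k + 1) (x ⊗ₜ[𝔽] c) = (x ⊗ₜ[𝔽] (c * b) : Tp 𝔽 V (k + 1)) :=
  LinearMap.lTensor_tmul _ _ _ _

theorem concatT_succ_tmul {p q : ℕ} (x : Tp 𝔽 V p) (z : Tp 𝔽 V q) (c : V) :
    concatT 𝔽 V p (q + 1) x (z ⊗ₜ[𝔽] c) = (concatT 𝔽 V p q x z ⊗ₜ[𝔽] c : Tp 𝔽 V (p + q + 1 + 1)) :=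
  LinearMap.rTensor_tmul _ _ _ _

theorem concatT_rmulT (p q : ℕ) (x : Tp 𝔽 V p) (z : Tp 𝔽 V q) (c : V) :
    concatT 𝔽 V p q x (rmulT 𝔽 V c q z) = rmulT 𝔽 V c (p + q + 1) (concatT 𝔽 V p q x z) := by
  cases q with
  | zero => exact (rmulT_succ_tmul c x z).symm
  | succ q =>
    induction z using Tp.induction_on with
    | zero => simp
    | tmul y e => rw [rmulT_succ_tmul, concatT_succ_tmul, concatT_succ_tmul, rmulT_succ_tmul]
    | add u v hu hv => simp only [map_add, hu, hv]

theorem concatT_lmulT (p q : ℕ) (a : V) (x : Tp 𝔽 V p) (z : Tp 𝔽 V q) :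
    concatT 𝔽 V p q (lmulT 𝔽 V a p x) z = lmulT 𝔽 V a (p + q + 1) (concatT 𝔽 V p q x z) := by
  induction q with
  | zero => exact (lmulT_succ_tmul a x z).symm
  | succ q ih =>
    induction z using Tp.induction_on with
    | zero => simp
    | tmul y e => rw [concatT_succ_tmul, concatT_succ_tmul, ih, lmulT_succ_tmul]; rfl
    | add u v hu hv => simp only [map_add, hu, hv]

end Tensor

section MulConcat

variable (𝔽 : Type) [Field 𝔽] (V : Type) [Ring V] [Algebra 𝔽 V]

noncomputable def rmulTBil : (p : ℕ) → V →ₗ[𝔽] Tp 𝔽 V p →ₗ[𝔽] Tp 𝔽 V p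
  | 0 => (LinearMap.mul 𝔽 V).flip
  | p + 1 => (LinearMap.lTensorHom (M := (Tp 𝔽 V p : Type)) (R := 𝔽)).comp (LinearMap.mul 𝔽 V).flip

/-- `mulConcatT p q (x₁ ⊗ ⋯ ⊗ xₚ₊₁) (w₁ ⊗ ⋯ ⊗ w_{q+1}) = x₁ ⊗ ⋯ ⊗ (xₚ₊₁ w₁) ⊗ ⋯ ⊗ w_{q+1}`. -/
noncomputable def mulConcatT : (p q : ℕ) → Tp 𝔽 V p →ₗ[𝔽] Tp 𝔽 V q →ₗ[𝔽] Tp 𝔽 V (p + q)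
  | p, 0 => (rmulTBil 𝔽 V p).flip
  | p, q + 1 => (LinearMap.rTensorHom V).comp (mulConcatT p q)

variable {𝔽 V}

theorem rmulTBil_apply (p : ℕ) (c : V) (x : Tp 𝔽 V p) : rmulTBil 𝔽 V p c x = rmulT 𝔽 V c p x := by
  cases p <;> rfl

theorem mulConcatT_zero_right (p : ℕ) (x : Tp 𝔽 V p) (c : V) :
    mulConcatT 𝔽 V p 0 x c = rmulT 𝔽 V c p x :=
  rmulTBil_apply p c x

theorem mulConcatT_succ_tmul (p q : ℕ) (x : Tp 𝔽 V p) (y : Tp 𝔽 V q) (c : V) :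
    mulConcatT 𝔽 V p (q + 1) x (y ⊗ₜ[𝔽] c) =
      (mulConcatT 𝔽 V p q x y ⊗ₜ[𝔽] c : Tp 𝔽 V (p + q + 1)) :=
  LinearMap.rTensor_tmul _ _ _ _

theorem mulConcatT_zero_left (q : ℕ) (a : V) (w : Tp 𝔽 V q) :
    mulConcatT 𝔽 V 0 q a w = castT 𝔽 V (Nat.zero_add q).symm (lmulT 𝔽 V a q w) := by
  induction q with
  | zero => rw [castT_rfl]; rfl
  | succ q ih =>
    induction w using Tp.induction_on with
    | zero => simp
    | tmul y e => rw [mulConcatT_succ_tmul (𝔽 := 𝔽) 0 q a y e, lmulT_succ_tmul, ih, castT_tmul]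
    | add u v hu hv => simp only [map_add, hu, hv]

theorem mulConcatT_succ_tmul_left (p q : ℕ) (x : Tp 𝔽 V p) (c : V) (w : Tp 𝔽 V q) :
    mulConcatT 𝔽 V (p + 1) q (x ⊗ₜ[𝔽] c) w =
      castT 𝔽 V (Nat.succ_add p q).symm (concatT 𝔽 V p q x (lmulT 𝔽 V c q w)) := by
  induction q with
  | zero => rw [castT_rfl]; exact rmulT_succ_tmul (𝔽 := 𝔽) (show V from w) x c
  | succ q ih =>
    induction w using Tp.induction_on with
    | zero => simp
    | tmul y e =>
      rw [mulConcatT_succ_tmul (𝔽 := 𝔽) (p + 1) q (x ⊗ₜ[𝔽] c) y e, lmulT_succ_tmul,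
        concatT_succ_tmul, ih, castT_tmul]
    | add u v hu hv => simp only [map_add, hu, hv]

end MulConcat

section Extension

variable {𝔽 : Type} [Field 𝔽] {V : Type} [Ring V] [Algebra 𝔽 V] {d : ℕ} (D : V →ₗ[𝔽] Tp 𝔽 V d)

theorem extD_succ_tmul (k : ℕ) (y : Tp 𝔽 V k) (c : V) :
    extD D (k + 1) (y ⊗ₜ[𝔽] c) =
      castT 𝔽 V (Nat.succ_add k d).symm (concatT 𝔽 V k d y (D c))
      + castT 𝔽 V (Nat.succ_add k d).symm (extD D k y ⊗ₜ[𝔽] c) :=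
  congrArg₂ (castT 𝔽 V (Nat.succ_add k d).symm · + castT 𝔽 V (Nat.succ_add k d).symm ·)
    (TensorProduct.lift.tmul _ _) (LinearMap.rTensor_tmul _ _ _ _)

variable {D}

theorem extD_rmulT (hD : IsNDeriv D) (k : ℕ) (b : V) (x : Tp 𝔽 V k) :
    extD D k (rmulT 𝔽 V b k x) =
      rmulT 𝔽 V b (k + d) (extD D k x) + mulConcatT 𝔽 V k d x (D b) := by
  cases k with
  | zero =>
    calc extD D 0 (rmulT 𝔽 V b 0 x)
        = castT 𝔽 V (Nat.zero_add d).symm (rmulT 𝔽 V b d (D x) + lmulT 𝔽 V x d (D b)) :=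
          congrArg _ (hD x b)
      _ = _ := by
          rw [map_add, castT_rmulT, mulConcatT_zero_left (𝔽 := 𝔽) d (show V from x)]
          rfl
  | succ k =>
    induction x using Tp.induction_on with
    | zero => simp
    | tmul y c =>
      rw [rmulT_succ_tmul, extD_succ_tmul D k y (c * b), extD_succ_tmul D k y c,
        mulConcatT_succ_tmul_left, hD c b]
      simp only [map_add]
      rw [concatT_rmulT, ← rmulT_succ_tmul (𝔽 := 𝔽) b (extD D k y) c, castT_rmulT,
        castT_rmulT (𝔽 := 𝔽) (Nat.succ_add k d).symm b (extD D k y ⊗ₜ[𝔽] c : Tp 𝔽 V (k + d + 1))]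
      abel
    | add u v hu hv =>
      simp only [map_add, LinearMap.add_apply, hu, hv]
      abel

theorem extD_lmulT (hD : IsNDeriv D) (k : ℕ) (a : V) (x : Tp 𝔽 V k) :
    extD D k (lmulT 𝔽 V a k x) =
      lmulT 𝔽 V a (k + d) (extD D k x)
        + castT 𝔽 V (Nat.add_comm d k) (mulConcatT 𝔽 V d k (D a) x) := by
  induction k with
  | zero =>
    calc extD D 0 (lmulT 𝔽 V a 0 x)
        = castT 𝔽 V (Nat.zero_add d).symm (rmulT 𝔽 V x d (D a) + lmulT 𝔽 V a d (D x)) :=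
          congrArg _ (hD a x)
      _ = _ := by
          rw [map_add, castT_lmulT]
          exact (add_comm _ _).trans
            (congrArg (_ + castT 𝔽 V (Nat.add_comm d 0) ·) (mulConcatT_zero_right d (D a) x).symm)
  | succ k ih =>
    induction x using Tp.induction_on with
    | zero => simp
    | tmul y c =>
      rw [lmulT_succ_tmul, extD_succ_tmul D k (lmulT 𝔽 V a k y) c, extD_succ_tmul D k y c,
        concatT_lmulT, ih y, mulConcatT_succ_tmul, Tp.add_tmul,
        ← lmulT_succ_tmul (𝔽 := 𝔽) a (extD D k y) c,
        castT_tmul (Nat.add_comm d k) (mulConcatT 𝔽 V d k (D a) y) c]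
      simp only [map_add]
      erw [map_add]
      rw [castT_lmulT,
        castT_lmulT (𝔽 := 𝔽) (Nat.succ_add k d).symm a (extD D k y ⊗ₜ[𝔽] c : Tp 𝔽 V (k + d + 1)),
        castT_castT (𝔽 := 𝔽) (congrArg Nat.succ (Nat.add_comm d k)) (Nat.succ_add k d).symm
          (mulConcatT 𝔽 V d k (D a) y ⊗ₜ[𝔽] c : Tp 𝔽 V (d + k + 1))]
      abel
    | add u v hu hv =>
      simp only [map_add, hu, hv]
      abel

end Extension

theorem statement_0_general (𝔽 : Type) [Field 𝔽] (V : Type) [Ring V] [Algebra 𝔽 V]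
    {d₁ d₂ : ℕ} (D₁ : V →ₗ[𝔽] Tp 𝔽 V d₁) (D₂ : V →ₗ[𝔽] Tp 𝔽 V d₂)
    (h₁ : IsNDeriv D₁) (h₂ : IsNDeriv D₂) :
    IsNDeriv ((extD D₁ d₂) ∘ₗ D₂
      - (castT 𝔽 V (Nat.add_comm d₁ d₂)).toLinearMap ∘ₗ ((extD D₂ d₁) ∘ₗ D₁)) := by
  intro a b
  simp only [LinearMap.sub_apply, LinearMap.comp_apply, LinearEquiv.coe_coe, map_sub]
  rw [h₂, h₁, map_add, map_add, extD_rmulT h₁, extD_lmulT h₁, extD_rmulT h₂, extD_lmulT h₂]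
  simp only [map_add, castT_castT, castT_rfl, castT_rmulT, castT_lmulT]
  abel

/-- if `D₁` is an `m`-fold derivation (`m = d₁+1`) and `D₂` an `n`-fold
derivation (`n = d₂+1`), then the commutator `D₁∘D₂ − D₂∘D₁` (computed using the
extensions to tensor powers) is an `(m+n−1)`-fold derivation. -/
theorem statement_0 (𝔽 : Type) [Field 𝔽] [CharZero 𝔽] (V : Type) [Ring V] [Algebra 𝔽 V]
    {d₁ d₂ : ℕ} (D₁ : V →ₗ[𝔽] Tp 𝔽 V d₁) (D₂ : V →ₗ[𝔽] Tp 𝔽 V d₂)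
    (h₁ : IsNDeriv D₁) (h₂ : IsNDeriv D₂) :
    IsNDeriv ((extD D₁ d₂) ∘ₗ D₂
      - (castT 𝔽 V (Nat.add_comm d₁ d₂)).toLinearMap ∘ₗ ((extD D₂ d₁) ∘ₗ D₁)) :=
  statement_0_general 𝔽 V D₁ D₂ h₁ h₂
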